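/- Let φ : ℝⁿ → ℝ be continuously differentiable with L-Lipschitz gradient, α > 0, ρ ≥ 0, and let f : ℝⁿ → ℝ. Given x_{k−1}, x_k ∈ ℝⁿ, set y_k = x_k + ρ(∇φ(x_{k−1}) − ∇φ(x_k)) and let x_{k+1} be a minimizer of x ↦ (1/(2α))‖x − y_k‖² + ⟨∇φ(x_k), x − y_k⟩ + f(x). Then f(x_{k+1}) + φ(x_{k+1}) ≤ f(x_k) + φ(x_k) + ((L(α+ρ) − 1)/(2α))‖x_{k+1} − x_k‖² + (Lρ/(2α))‖x_k − x_{k−1}‖². -/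

import Mathlib

/-!
Comparing the proximal objective at its minimiser `x_{k+1}` with its value at `x_k` bounds
`f x_{k+1} - f x_k` by
`-⟪∇φ x_k, x_{k+1} - x_k⟫ + (2⟪x_{k+1} - x_k, y_k - x_k⟫ - ‖x_{k+1} - x_k‖²) / (2α)`.
The descent lemma `φ x_{k+1} ≤ φ x_k + ⟪∇φ x_k, x_{k+1} - x_k⟫ + L/2 ‖x_{k+1} - x_k‖²` cancels the
linear term, and the reflection `y_k - x_k = ρ (∇φ x_{k-1} - ∇φ x_k)` is controlled by
Cauchy–Schwarz, the Lipschitz bound on `∇φ` and `2ab ≤ a² + b²`.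
-/

open RealInnerProductSpace Gradient

section Descent

variable {E : Type*} [NormedAddCommGroup E] [InnerProductSpace ℝ E] [CompleteSpace E]
  {φ : E → ℝ}

theorem hasDerivAt_comp_add_smul (hφ : Differentiable ℝ φ) (x s : E) (t : ℝ) :
    HasDerivAt (fun t : ℝ => φ (x + t • s)) ⟪∇ φ (x + t • s), s⟫ t := by
  have hline : HasDerivAt (fun t : ℝ => x + t • s) s t := by
    simpa using ((hasDerivAt_id t).smul_const s).const_add x
  exact (hφ _).hasGradientAt.hasFDerivAt.comp_hasDerivAt t hline

theorem le_add_inner_gradient_add_half_mul_sq {L : ℝ} (hφ : Differentiable ℝ φ)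
    (hLip : ∀ x y : E, ‖∇ φ x - ∇ φ y‖ ≤ L * ‖x - y‖) (x y : E) :
    φ y ≤ φ x + ⟪∇ φ x, y - x⟫ + L / 2 * ‖y - x‖ ^ 2 := by
  set s := y - x
  -- The Lipschitz bound makes `g` nonincreasing on `t ≥ 0`; comparing `g 1` with `g 0` is the claim.
  let g : ℝ → ℝ := fun t => φ (x + t • s) - t * ⟪∇ φ x, s⟫ - L / 2 * t ^ 2 * ‖s‖ ^ 2
  have hg : ∀ t, HasDerivAt g (⟪∇ φ (x + t • s) - ∇ φ x, s⟫ - L * t * ‖s‖ ^ 2) t := fun t => by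
    have hquad := ((hasDerivAt_pow 2 t).const_mul (L / 2)).mul_const (‖s‖ ^ 2)
    refine (((hasDerivAt_comp_add_smul hφ x s t).sub
      ((hasDerivAt_id t).mul_const ⟪∇ φ x, s⟫)).sub hquad).congr_deriv ?_
    rw [inner_sub_left]
    norm_num only [id, one_mul]
    ring
  obtain ⟨c, hc, hslope⟩ := exists_hasDerivAt_eq_slope g _ zero_lt_one
    (continuous_iff_continuousAt.2 fun t => (hg t).continuousAt).continuousOn (fun t _ => hg t)
  have hderiv_nonpos : ⟪∇ φ (x + c • s) - ∇ φ x, s⟫ - L * c * ‖s‖ ^ 2 ≤ 0 := by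
    have hnorm : ‖x + c • s - x‖ = c * ‖s‖ := by
      rw [add_sub_cancel_left, norm_smul, Real.norm_of_nonneg hc.1.le]
    have hinner : ⟪∇ φ (x + c • s) - ∇ φ x, s⟫ ≤ L * (c * ‖s‖) * ‖s‖ :=
      (real_inner_le_norm _ _).trans <| by
        rw [← hnorm]
        exact mul_le_mul_of_nonneg_right (hLip (x + c • s) x) (norm_nonneg s)
    linear_combination hinner
  have hx : x + s = y := add_sub_cancel x y
  simp only [g, sub_zero, div_one, zero_smul, add_zero, one_smul, hx] at hslope
  linarith

end Descent

section InnerProductSpace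

variable {E : Type*} [NormedAddCommGroup E] [InnerProductSpace ℝ E]

theorem real_inner_le_half_mul_add_sq {a b : E} {c r : ℝ} (hc : 0 ≤ c) (hb : ‖b‖ ≤ c * r) :
    ⟪a, b⟫ ≤ c / 2 * (‖a‖ ^ 2 + r ^ 2) :=
  calc ⟪a, b⟫ ≤ ‖a‖ * ‖b‖ := real_inner_le_norm a b
    _ ≤ ‖a‖ * (c * r) := mul_le_mul_of_nonneg_left hb (norm_nonneg a)
    _ ≤ c / 2 * (‖a‖ ^ 2 + r ^ 2) := by nlinarith [mul_nonneg hc (sq_nonneg (‖a‖ - r))]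

theorem add_inner_sub_le_of_prox_le {f : E → ℝ} {α : ℝ} {g y z w : E}
    (h : 1 / (2 * α) * ‖z - y‖ ^ 2 + ⟪g, z - y⟫ + f z ≤
      1 / (2 * α) * ‖w - y‖ ^ 2 + ⟪g, w - y⟫ + f w) :
    f z + ⟪g, z - w⟫ ≤ f w + (2 * ⟪z - w, y - w⟫ - ‖z - w‖ ^ 2) / (2 * α) := by
  have hzy : z - y = (z - w) - (y - w) := by abel
  have hwy : w - y = -(y - w) := by abel
  rw [hzy, hwy, norm_sub_sq_real, norm_neg, inner_sub_right g, inner_neg_right] at h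
  linear_combination h

end InnerProductSpace

theorem stmt_2 {n : ℕ} (φ f : EuclideanSpace ℝ (Fin n) → ℝ)
    (L α ρ : ℝ) (hL : 0 < L) (hα : 0 < α) (hρ : 0 ≤ ρ)
    (hφ : ContDiff ℝ 1 φ)
    (hLip : ∀ x y : EuclideanSpace ℝ (Fin n), ‖∇ φ x - ∇ φ y‖ ≤ L * ‖x - y‖)
    (xkm1 xk xk1 yk : EuclideanSpace ℝ (Fin n))
    (hyk : yk = xk + ρ • (∇ φ xkm1 - ∇ φ xk))
    (hmin : ∀ x : EuclideanSpace ℝ (Fin n),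
      (1 / (2 * α)) * ‖xk1 - yk‖ ^ 2 + ⟪∇ φ xk, xk1 - yk⟫ + f xk1 ≤
        (1 / (2 * α)) * ‖x - yk‖ ^ 2 + ⟪∇ φ xk, x - yk⟫ + f x) :
    f xk1 + φ xk1 ≤ f xk + φ xk
      + ((L * (α + ρ) - 1) / (2 * α)) * ‖xk1 - xk‖ ^ 2
      + (L * ρ / (2 * α)) * ‖xk - xkm1‖ ^ 2 := by
  have hprox := add_inner_sub_le_of_prox_le (hmin xk)
  have hdescent :=
    le_add_inner_gradient_add_half_mul_sq (hφ.differentiable one_ne_zero) hLip xk xk1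
  have hreflected : ⟪xk1 - xk, yk - xk⟫ ≤ L * ρ / 2 * (‖xk1 - xk‖ ^ 2 + ‖xk - xkm1‖ ^ 2) := by
    refine real_inner_le_half_mul_add_sq (by positivity) ?_
    rw [hyk, add_sub_cancel_left, norm_smul, Real.norm_of_nonneg hρ, mul_comm L, mul_assoc,
      norm_sub_rev xk]
    exact mul_le_mul_of_nonneg_left (hLip xkm1 xk) hρ
  have hquot : (2 * ⟪xk1 - xk, yk - xk⟫ - ‖xk1 - xk‖ ^ 2) / (2 * α) ≤
      (L * ρ * (‖xk1 - xk‖ ^ 2 + ‖xk - xkm1‖ ^ 2) - ‖xk1 - xk‖ ^ 2) / (2 * α) :=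
    div_le_div_of_nonneg_right (by linarith) (by positivity)
  have hsplit : ((L * (α + ρ) - 1) / (2 * α)) * ‖xk1 - xk‖ ^ 2
      + (L * ρ / (2 * α)) * ‖xk - xkm1‖ ^ 2 = L / 2 * ‖xk1 - xk‖ ^ 2
      + (L * ρ * (‖xk1 - xk‖ ^ 2 + ‖xk - xkm1‖ ^ 2) - ‖xk1 - xk‖ ^ 2) / (2 * α) := by
    field_simp
    ring
  linarith
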